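/- arXiv:2206.05795 — 3 statements merged into one kernel-verified Lean document; each statement's English description precedes it below -/
import Mathlib

section
/- Let G be any group, let a and b be elements of G, and let n be a positive integer. Then [a,b]^n is a product of ⌊n/2⌋ + 1 commutators in G. -/
/-- `g` is a product of `k` commutators `x⁻¹ * y⁻¹ * x * y`. -/
def IsProdOfCommutators {G : Type*} [Group G] (g : G) (k : ℕ) : Prop :=
  ∃ x y : Fin k → G, g = (List.ofFn (fun i => (x i)⁻¹ * (y i)⁻¹ * x i * y i)).prod

/-!
With `c = [a, b]` and `e = b c b⁻¹`, both `c e = [a⁻² b a, a⁻² b⁻¹ a]` and every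
`c⁻ʲ eʲ⁺¹ = [c⁻ʲ b⁻¹ cʲ, c⁻ʲ a]` are single commutators. Peeling off the factor `c e` gives
`c⁻ʲ eʲ⁺³⁺²ᵗ = (c e) · e⁻¹ (c⁻⁽ʲ⁺¹⁾ eʲ⁺²⁺²ᵗ) e`, so each commutator pays for two more powers of `e`,
and `e²ᵗ⁺¹`, a conjugate of `c²ᵗ⁺¹`, is a product of `t + 1` commutators.
-/

namespace IsProdOfCommutators

variable {G H : Type*} [Group G] [Group H]

theorem commutator (x y : G) : IsProdOfCommutators (x⁻¹ * y⁻¹ * x * y) 1 :=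
  ⟨fun _ => x, fun _ => y, by simp⟩

theorem commutator_mul (x y : G) {g : G} {k : ℕ} (h : IsProdOfCommutators g k) :
    IsProdOfCommutators (x⁻¹ * y⁻¹ * x * y * g) (k + 1) := by
  obtain ⟨xs, ys, rfl⟩ := h
  exact ⟨Fin.cons x xs, Fin.cons y ys, by simp [List.ofFn_succ]⟩

theorem map (f : G →* H) {g : G} {k : ℕ} (h : IsProdOfCommutators g k) :
    IsProdOfCommutators (f g) k := by
  obtain ⟨xs, ys, rfl⟩ := h
  exact ⟨f ∘ xs, f ∘ ys, by simp [map_list_prod, List.map_ofFn, Function.comp_def]⟩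

theorem conj (p : G) {g : G} {k : ℕ} (h : IsProdOfCommutators g k) :
    IsProdOfCommutators (p * g * p⁻¹) k :=
  h.map (MulAut.conj p).toMonoidHom

theorem inv_pow_mul_pow {c e : G} (hce : ∃ x y : G, c * e = x⁻¹ * y⁻¹ * x * y)
    (hbase : ∀ j : ℕ, IsProdOfCommutators ((c ^ j)⁻¹ * e ^ (j + 1)) 1) (t : ℕ) :
    ∀ j : ℕ, IsProdOfCommutators ((c ^ j)⁻¹ * e ^ (j + 1 + 2 * t)) (t + 1) := by
  induction t with
  | zero => simpa using hbase
  | succ t ih =>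
    intro j
    obtain ⟨x, y, hxy⟩ := hce
    have peel : (c ^ j)⁻¹ * e ^ (j + 1 + 2 * (t + 1)) =
        c * e * (e⁻¹ * ((c ^ (j + 1))⁻¹ * e ^ (j + 1 + 1 + 2 * t)) * e⁻¹⁻¹) := by
      rw [show j + 1 + 2 * (t + 1) = j + 1 + 1 + 2 * t + 1 by ring]
      group
    rw [peel, hxy]
    exact commutator_mul x y ((ih (j + 1)).conj e⁻¹)

theorem commutator_pow_odd (a b : G) (t : ℕ) :
    IsProdOfCommutators ((a⁻¹ * b⁻¹ * a * b) ^ (2 * t + 1)) (t + 1) := by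
  set c := a⁻¹ * b⁻¹ * a * b with hc
  set e := b * c * b⁻¹ with he
  have hce : c * e = (a⁻¹ * a⁻¹ * b * a)⁻¹ * (a⁻¹ * a⁻¹ * b⁻¹ * a)⁻¹ *
      (a⁻¹ * a⁻¹ * b * a) * (a⁻¹ * a⁻¹ * b⁻¹ * a) := by
    rw [he, hc]; group
  have hbase (j : ℕ) : (c ^ j)⁻¹ * e ^ (j + 1) =
      ((c ^ j)⁻¹ * b⁻¹ * c ^ j)⁻¹ * ((c ^ j)⁻¹ * a)⁻¹ * ((c ^ j)⁻¹ * b⁻¹ * c ^ j) *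
        ((c ^ j)⁻¹ * a) := by
    have hcb : c * b⁻¹ = a⁻¹ * b⁻¹ * a := by rw [hc]; group
    calc (c ^ j)⁻¹ * e ^ (j + 1) = (c ^ j)⁻¹ * b * c ^ j * (c * b⁻¹) := by
          rw [he, conj_pow]; group
      _ = _ := by rw [hcb]; group
  have h := inv_pow_mul_pow ⟨_, _, hce⟩ (fun j => hbase j ▸ commutator _ _) t 0
  have hconj : b⁻¹ * e ^ (2 * t + 1) * b⁻¹⁻¹ = c ^ (2 * t + 1) := by
    rw [he, conj_pow]; group
  rw [← hconj]
  simpa [add_comm] using h.conj b⁻¹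

theorem commutator_pow_even (a b : G) (t : ℕ) :
    IsProdOfCommutators ((a⁻¹ * b⁻¹ * a * b) ^ (2 * t)) (t + 1) := by
  cases t with
  | zero => simpa using commutator (1 : G) 1
  | succ t =>
    rw [show 2 * (t + 1) = 2 * t + 1 + 1 by ring, pow_succ']
    exact commutator_mul a b (commutator_pow_odd a b t)

end IsProdOfCommutators

theorem stmt6_general {G : Type*} [Group G] (a b : G) (n : ℕ) :
    IsProdOfCommutators ((a⁻¹ * b⁻¹ * a * b) ^ n) (n / 2 + 1) := by
  obtain ⟨t, rfl | rfl⟩ := Nat.even_or_odd' n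
  · rw [show 2 * t / 2 = t by omega]
    exact IsProdOfCommutators.commutator_pow_even a b t
  · rw [show (2 * t + 1) / 2 = t by omega]
    exact IsProdOfCommutators.commutator_pow_odd a b t

theorem stmt6 {G : Type*} [Group G] (a b : G) (n : ℕ) (hn : 0 < n) :
    IsProdOfCommutators ((a⁻¹ * b⁻¹ * a * b) ^ n) (n / 2 + 1) :=
  stmt6_general a b n
end

section
/- Let G be a group and let a, t ∈ G with a² = 1. Then for every positive integer n, the element [a,t]^n is a commutator in G; explicitly, [a,t]^n = [a, c_n] where c_n = t^{(−1)^{n+1}} a t^{(−1)^n} a ⋯ a t^{(−1)^2} is the alternating product ending in a t (with n−1 occurrences of the letter a and n occurrences of t with alternating exponents ±1, the last exponent being +1). -/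
/-- The alternating word `c_n = t^((-1)^(n+1)) * a * t^((-1)^n) * a * ⋯ * a * t^((-1)^2)`,
with `n` occurrences of `t` (with alternating exponents `±1`, the last one being `+1`)
and `n - 1` occurrences of `a`. -/
def altWord {G : Type*} [Group G] (a t : G) : ℕ → G
  | 0 => 1
  | 1 => t
  | (n + 2) => t ^ ((-1 : ℤ) ^ (n + 3)) * a * altWord a t (n + 1)

/-!
Write `x = [a, t] = a⁻¹ t⁻¹ a t`. Since `a` is an involution, conjugation by `a` inverts `x`,
and the alternating words have the closed forms `c_{2k+1} = t xᵏ` and `c_{2k+2} = a xᵏ⁺¹`.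
Commuting `a` past `x⁻ᵏ` then gives `[a, t xᵏ] = xᵏ · x · xᵏ` and `[a, a xᵐ] = xᵐ · xᵐ`.
-/

section Inversion

variable {G : Type*} [Group G] {a x : G}

lemma inv_mul_inv_pow_mul (h : a⁻¹ * x * a = x⁻¹) (k : ℕ) :
    a⁻¹ * (x ^ k)⁻¹ * a = x ^ k := by
  have h' : a⁻¹ * x⁻¹ * a = x :=
    calc a⁻¹ * x⁻¹ * a = (a⁻¹ * x * a)⁻¹ := by group
      _ = x := by rw [h, inv_inv]
  simpa [h', inv_pow] using (conj_pow (a := a⁻¹) (b := x⁻¹) (i := k)).symm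

lemma commutator_mul_pow_self (h : a⁻¹ * x * a = x⁻¹) (m : ℕ) :
    a⁻¹ * (a * x ^ m)⁻¹ * a * (a * x ^ m) = x ^ (2 * m) := by
  calc a⁻¹ * (a * x ^ m)⁻¹ * a * (a * x ^ m)
      = (a⁻¹ * (x ^ m)⁻¹ * a) * x ^ m := by group
    _ = x ^ (2 * m) := by rw [inv_mul_inv_pow_mul h, two_mul, pow_add]

end Inversion

section Involution

variable {G : Type*} [Group G] {a : G}

lemma inv_mul_commutator_mul (ha : a ^ 2 = 1) (t : G) :
    a⁻¹ * (a⁻¹ * t⁻¹ * a * t) * a = (a⁻¹ * t⁻¹ * a * t)⁻¹ := by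
  have haa : a * a = 1 := by rw [← sq, ha]
  have hinv : a⁻¹ = a := inv_eq_of_mul_eq_one_right haa
  simp only [mul_inv_rev, inv_inv, hinv, mul_assoc]
  rw [← mul_assoc, haa, one_mul]

lemma commutator_mul_pow_commutator (ha : a ^ 2 = 1) (t : G) (k : ℕ) :
    a⁻¹ * (t * (a⁻¹ * t⁻¹ * a * t) ^ k)⁻¹ * a * (t * (a⁻¹ * t⁻¹ * a * t) ^ k) =
      (a⁻¹ * t⁻¹ * a * t) ^ (2 * k + 1) := by
  set x := a⁻¹ * t⁻¹ * a * t with hx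
  calc a⁻¹ * (t * x ^ k)⁻¹ * a * (t * x ^ k)
      = (a⁻¹ * (x ^ k)⁻¹ * a) * x * x ^ k := by rw [hx]; group
    _ = x ^ (2 * k + 1) := by
      rw [inv_mul_inv_pow_mul (inv_mul_commutator_mul ha t), ← pow_succ, ← pow_add,
        add_right_comm, ← two_mul]

end Involution

section AltWord

variable {G : Type*} [Group G] {a : G} (t : G)

lemma altWord_two_mul_add_two (k : ℕ) :
    altWord a t (2 * k + 2) = t⁻¹ * a * altWord a t (2 * k + 1) := by
  rw [altWord, Odd.neg_one_pow (⟨k + 1, by ring⟩ : Odd (2 * k + 3)), zpow_neg_one]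

lemma altWord_two_mul_add_three (k : ℕ) :
    altWord a t (2 * k + 3) = t * a * altWord a t (2 * k + 2) := by
  rw [altWord, Even.neg_one_pow (⟨k + 2, by ring⟩ : Even (2 * k + 1 + 3)), zpow_one]

lemma altWord_two_mul_add_one_eq_mul_pow (ha : a ^ 2 = 1) (k : ℕ) :
    altWord a t (2 * k + 1) = t * (a⁻¹ * t⁻¹ * a * t) ^ k := by
  have hinv : a⁻¹ = a := inv_eq_of_mul_eq_one_right (by rw [← sq, ha])
  induction k with
  | zero => simp [altWord]
  | succ k ih =>
    rw [show 2 * (k + 1) + 1 = 2 * k + 3 by ring, altWord_two_mul_add_three,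
      altWord_two_mul_add_two, ih, pow_succ', hinv]
    simp only [mul_assoc]

lemma altWord_two_mul_succ_eq_mul_pow (ha : a ^ 2 = 1) (k : ℕ) :
    altWord a t (2 * (k + 1)) = a * (a⁻¹ * t⁻¹ * a * t) ^ (k + 1) := by
  rw [mul_add_one, altWord_two_mul_add_two, altWord_two_mul_add_one_eq_mul_pow t ha,
    pow_succ']
  simp only [mul_assoc, mul_inv_cancel_left]

end AltWord

theorem stmt9_general {G : Type*} [Group G] (a t : G) (ha : a ^ 2 = 1) (n : ℕ) :
    (a⁻¹ * t⁻¹ * a * t) ^ n =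
      a⁻¹ * (altWord a t n)⁻¹ * a * altWord a t n := by
  obtain ⟨k, rfl | rfl⟩ := Nat.even_or_odd' n
  · rcases k with _ | k
    · simp [altWord]
    · rw [altWord_two_mul_succ_eq_mul_pow t ha,
        commutator_mul_pow_self (inv_mul_commutator_mul ha t)]
  · rw [altWord_two_mul_add_one_eq_mul_pow t ha, commutator_mul_pow_commutator ha]

theorem stmt9 {G : Type*} [Group G] (a t : G) (ha : a ^ 2 = 1) (n : ℕ) (hn : 0 < n) :
    (a⁻¹ * t⁻¹ * a * t) ^ n =
      a⁻¹ * (altWord a t n)⁻¹ * a * altWord a t n :=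
  stmt9_general a t ha n
end

section
/- Let G = *_{j∈J} A_j be the free product of a family of nontrivial groups indexed by a set J with at least two elements. Let a ∈ A_{j₁} and t ∈ A_{j₂} be nonidentity elements with j₁ ≠ j₂. Then for every positive integer n, the element ([of_{j₁}(a), of_{j₂}(t)])^n is not conjugate in G to any element of the image of any canonical inclusion of_j : A_j → G; in particular it is not the identity. -/
/-!
A conjugate `u * of x * u⁻¹` of a letter has a reduced word that is empty or begins and ends in
the same factor: after absorbing into `x` the trailing letters of the reduced word `w` of `u` that
lie in the factor of `x`, the word `w x w⁻¹` is already reduced. The reduced word of `[a, t] ^ n`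
is the `n`-fold concatenation of `a⁻¹ t⁻¹ a t`, which begins in `A j₁` and ends in `A j₂`.
-/

namespace Monoid.CoprodI.Word

variable {ι : Type*} {G : ι → Type*} [∀ i, Group (G i)]

def lastIdx (w : Word G) : Option ι :=
  w.toList.getLast?.map Sigma.fst

def inv (w : Word G) : Word G where
  toList := (w.toList.map fun p => ⟨p.1, p.2⁻¹⟩).reverse
  ne_one := by
    simp only [List.mem_reverse, List.mem_map, forall_exists_index, and_imp]
    rintro _ p hp rfl
    exact inv_ne_one.mpr (w.ne_one p hp)
  chain_ne := by
    rw [List.isChain_reverse, List.isChain_map]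
    exact w.chain_ne.imp fun _ _ h => Ne.symm h

lemma prod_inv (w : Word G) : w.inv.prod = w.prod⁻¹ := by
  simp [inv, prod, List.prod_inv_reverse, Function.comp_def]

lemma fstIdx_inv (w : Word G) : w.inv.fstIdx = w.lastIdx := by
  simp [inv, fstIdx, lastIdx, List.head?_reverse, Option.map_map, Function.comp_def]

lemma lastIdx_inv (w : Word G) : w.inv.lastIdx = w.fstIdx := by
  simp [inv, fstIdx, lastIdx, List.getLast?_reverse, Option.map_map, Function.comp_def]

def conj (w : Word G) {i : ι} (x : G i) (hx : x ≠ 1) (hw : w.lastIdx ≠ some i) :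
    Word G where
  toList := w.toList ++ [⟨i, x⟩] ++ w.inv.toList
  ne_one := by
    simp only [List.mem_append, List.mem_singleton]
    rintro p ((hp | rfl) | hp)
    exacts [w.ne_one p hp, hx, w.inv.ne_one p hp]
  chain_ne := by
    refine (w.chain_ne.append (List.isChain_singleton _) ?_).append w.inv.chain_ne ?_
    · simp only [List.head?_cons, Option.mem_def, Option.some.injEq]
      rintro p hp _ rfl h
      exact hw (by simp [lastIdx, hp, h])
    · simp only [List.getLast?_concat, Option.mem_def, Option.some.injEq]
      rintro _ rfl q hq h
      have : w.inv.fstIdx = some q.1 := by simp [fstIdx, Option.mem_def.mp hq]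
      exact hw (by rw [← fstIdx_inv, this, ← h])

lemma prod_conj (w : Word G) {i : ι} (x : G i) (hx : x ≠ 1) (hw : w.lastIdx ≠ some i) :
    (w.conj x hx hw).prod = w.prod * of x * w.prod⁻¹ := by
  rw [← prod_inv]
  simp [conj, prod, mul_assoc]

lemma fstIdx_conj_eq_lastIdx (w : Word G) {i : ι} (x : G i) (hx : x ≠ 1)
    (hw : w.lastIdx ≠ some i) :
    (w.conj x hx hw).fstIdx = (w.conj x hx hw).lastIdx := by
  rcases hL : w.toList with _ | ⟨p, L⟩
  · simp [conj, fstIdx, lastIdx, inv, hL]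
  · have hinv : w.inv.toList ≠ [] := by simp [inv, hL]
    calc (w.conj x hx hw).fstIdx = w.fstIdx := by simp [conj, fstIdx, hL]
      _ = w.inv.lastIdx := (lastIdx_inv w).symm
      _ = _ := by simp only [conj, lastIdx, List.getLast?_append_of_ne_nil _ hinv]

lemma exists_fstIdx_eq_lastIdx_prod_eq_conj_of_lastIdx_ne (w : Word G) {i : ι} (x : G i)
    (hw : w.lastIdx ≠ some i) :
    ∃ v : Word G, v.fstIdx = v.lastIdx ∧ v.prod = w.prod * of x * w.prod⁻¹ := by
  by_cases hx : x = 1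
  · exact ⟨empty, rfl, by simp [hx]⟩
  · exact ⟨w.conj x hx hw, fstIdx_conj_eq_lastIdx .., prod_conj ..⟩

theorem exists_fstIdx_eq_lastIdx_prod_eq_conj (w : Word G) {i : ι} (x : G i) :
    ∃ v : Word G, v.fstIdx = v.lastIdx ∧ v.prod = w.prod * of x * w.prod⁻¹ := by
  obtain ⟨L, hne, hchain⟩ := w
  induction L using List.reverseRecOn generalizing i x with
  | nil => exact exists_fstIdx_eq_lastIdx_prod_eq_conj_of_lastIdx_ne _ x (by simp [lastIdx])
  | append_singleton L p ih =>
    obtain ⟨k, m⟩ := p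
    by_cases hk : k = i
    · subst hk
      obtain ⟨v, hv, hprod⟩ := ih (m * x * m⁻¹)
        (fun p hp => hne p (List.mem_append_left _ hp)) hchain.left_of_append
      refine ⟨v, hv, ?_⟩
      simp only [prod, List.map_append, List.prod_append] at hprod ⊢
      simp [hprod, mul_assoc]
    · exact exists_fstIdx_eq_lastIdx_prod_eq_conj_of_lastIdx_ne _ x (by simpa [lastIdx] using hk)

end Monoid.CoprodI.Word

namespace Monoid.CoprodI

variable {ι : Type*}

theorem exists_word_fstIdx_eq_lastIdx_prod_eq_conj {G : ι → Type*} [∀ i, Group (G i)]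
    [DecidableEq ι] [∀ i, DecidableEq (G i)] (u : CoprodI G) {i : ι} (x : G i) :
    ∃ v : Word G, v.fstIdx = v.lastIdx ∧ v.prod = u * of x * u⁻¹ := by
  have hu : (Word.equiv u).prod = u := Word.equiv.symm_apply_apply u
  simpa only [hu] using
    Word.exists_fstIdx_eq_lastIdx_prod_eq_conj (Word.equiv u) x

namespace NeWord

def powSucc {M : ι → Type*} [∀ i, Monoid (M i)] {i j : ι} (w : NeWord M i j) (h : j ≠ i) :
    ℕ → NeWord M i j
  | 0 => w
  | n + 1 => w.append h (w.powSucc h n)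

theorem prod_powSucc {M : ι → Type*} [∀ i, Monoid (M i)] {i j : ι} (w : NeWord M i j)
    (h : j ≠ i) (n : ℕ) : (w.powSucc h n).prod = w.prod ^ (n + 1) := by
  induction n with
  | zero => simp [powSucc]
  | succ n ih => rw [powSucc, append_prod, ih, pow_succ' _ (n + 1)]

variable {G : ι → Type*} [∀ i, Group (G i)]

theorem not_isConj_of_prod {i j : ι} (w : NeWord G i j) (hij : i ≠ j) {k : ι} (x : G k) :
    ¬IsConj (of x) w.prod := by
  classical
  intro hconj
  obtain ⟨u, hu⟩ := isConj_iff.mp hconj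
  obtain ⟨v, hv, hprod⟩ := exists_word_fstIdx_eq_lastIdx_prod_eq_conj u x
  obtain rfl : v = w.toWord := Word.equiv.symm.injective (hprod.trans hu)
  have hfst : w.toWord.fstIdx = some i := by simp [toWord, Word.fstIdx]
  have hlast : w.toWord.lastIdx = some j := by simp [toWord, Word.lastIdx]
  exact hij (Option.some.inj (hfst.symm.trans (hv.trans hlast)))

def commutator {i j : ι} (hij : i ≠ j) {a : G i} {b : G j} (ha : a ≠ 1) (hb : b ≠ 1) :
    NeWord G i j :=
  ((singleton a⁻¹ (inv_ne_one.mpr ha)).append hij (singleton b⁻¹ (inv_ne_one.mpr hb))).append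
    hij.symm ((singleton a ha).append hij (singleton b hb))

theorem prod_commutator {i j : ι} (hij : i ≠ j) {a : G i} {b : G j} (ha : a ≠ 1)
    (hb : b ≠ 1) :
    (commutator hij ha hb).prod = (of a)⁻¹ * (of b)⁻¹ * of a * of b := by
  simp [commutator, mul_assoc]

end NeWord

end Monoid.CoprodI

theorem stmt13_general {J : Type*} (A : J → Type*) [∀ j, Group (A j)]
    {j₁ j₂ : J} (hj : j₁ ≠ j₂)
    (a : A j₁) (t : A j₂) (ha : a ≠ 1) (ht : t ≠ 1) (n : ℕ) (hn : 0 < n) :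
    (∀ (j : J) (x : A j),
      ¬ IsConj (Monoid.CoprodI.of x)
        (((Monoid.CoprodI.of a)⁻¹ * (Monoid.CoprodI.of t)⁻¹ *
          Monoid.CoprodI.of a * Monoid.CoprodI.of t) ^ n)) ∧
    ((Monoid.CoprodI.of a)⁻¹ * (Monoid.CoprodI.of t)⁻¹ *
      Monoid.CoprodI.of a * Monoid.CoprodI.of t) ^ n ≠ 1 := by
  obtain ⟨m, rfl⟩ := Nat.exists_eq_add_one_of_ne_zero hn.ne'
  set w := (Monoid.CoprodI.NeWord.commutator hj ha ht).powSucc hj.symm m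
  have hprod : w.prod = ((Monoid.CoprodI.of a)⁻¹ * (Monoid.CoprodI.of t)⁻¹ *
      Monoid.CoprodI.of a * Monoid.CoprodI.of t) ^ (m + 1) := by
    rw [Monoid.CoprodI.NeWord.prod_powSucc, Monoid.CoprodI.NeWord.prod_commutator]
  rw [← hprod]
  refine ⟨fun j x => w.not_isConj_of_prod hj x, fun h1 => ?_⟩
  exact w.not_isConj_of_prod hj (1 : A j₁) (by rw [map_one, h1])

theorem stmt13 {J : Type*} [Nontrivial J] (A : J → Type*) [∀ j, Group (A j)]
    [∀ j, Nontrivial (A j)] {j₁ j₂ : J} (hj : j₁ ≠ j₂)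
    (a : A j₁) (t : A j₂) (ha : a ≠ 1) (ht : t ≠ 1) (n : ℕ) (hn : 0 < n) :
    (∀ (j : J) (x : A j),
      ¬ IsConj (Monoid.CoprodI.of x)
        (((Monoid.CoprodI.of a)⁻¹ * (Monoid.CoprodI.of t)⁻¹ *
          Monoid.CoprodI.of a * Monoid.CoprodI.of t) ^ n)) ∧
    ((Monoid.CoprodI.of a)⁻¹ * (Monoid.CoprodI.of t)⁻¹ *
      Monoid.CoprodI.of a * Monoid.CoprodI.of t) ^ n ≠ 1 :=
  stmt13_general A hj a t ha ht n hn
end
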